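/- The query computing the variance of n real values each normalized to lie in [0,1] has global sensitivity at most 1/n with respect to changing one of the n values. -/

import Mathlib

/-!
Write the variance through pairwise differences, `n · Σᵢ (aᵢ - ā)² = ½ Σᵢ Σⱼ (aᵢ - aⱼ)²`.
Changing the coordinate `i₀` changes only the `2n - 1` terms of the double sum with `i = i₀` or
`j = i₀`, each by at most `1` since all squared differences lie in `[0, 1]`. Hence the double sum
moves by at most `2n`, and the variance by at most `2n / (2n · n) = 1 / n`.
-/

open Finset

theorem sum_sq_sub_mean_eq_sum_sum_sq_sub {ι : Type*} [Fintype ι] (b : ι → ℝ) :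
    ∑ i, (b i - 1 / (Fintype.card ι : ℝ) * ∑ l, b l) ^ 2 =
      1 / (2 * Fintype.card ι) * ∑ i, ∑ j, (b i - b j) ^ 2 := by
  rcases isEmpty_or_nonempty ι with hι | hι
  · simp
  have hn : (Fintype.card ι : ℝ) ≠ 0 := by positivity
  simp only [sub_sq, sum_add_distrib, sum_sub_distrib, sum_const, card_univ, nsmul_eq_mul,
    ← mul_sum, ← sum_mul, mul_pow]
  field_simp
  ring

theorem sq_sub_le_one_of_mem_Icc {x y : ℝ} (hx : x ∈ Set.Icc (0 : ℝ) 1)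
    (hy : y ∈ Set.Icc (0 : ℝ) 1) :
    (x - y) ^ 2 ≤ 1 := by
  rw [sq_le_one_iff_abs_le_one, abs_le]
  constructor <;> linarith [hx.1, hx.2, hy.1, hy.2]

theorem abs_sub_sq_sub_sub_sq_le {ι : Type*} [DecidableEq ι] {b b' : ι → ℝ}
    (hb : ∀ i, b i ∈ Set.Icc (0 : ℝ) 1) (hb' : ∀ i, b' i ∈ Set.Icc (0 : ℝ) 1) {i₀ : ι}
    (heq : ∀ j, j ≠ i₀ → b j = b' j) (i j : ι) :
    |(b i - b j) ^ 2 - (b' i - b' j) ^ 2| ≤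
      (if i = i₀ then 1 else 0) + (if j = i₀ then 1 else 0) := by
  by_cases hij : i ≠ i₀ ∧ j ≠ i₀
  · simp [hij, heq i hij.1, heq j hij.2]
  have hle : 1 ≤ (if i = i₀ then (1 : ℝ) else 0) + (if j = i₀ then 1 else 0) := by
    rw [not_and_or, not_not, not_not] at hij
    rcases hij with rfl | rfl <;> simp <;> positivity
  exact (abs_sub_le_of_nonneg_of_le (sq_nonneg _) (sq_sub_le_one_of_mem_Icc (hb i) (hb j))
    (sq_nonneg _) (sq_sub_le_one_of_mem_Icc (hb' i) (hb' j))).trans hle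

theorem abs_sum_sum_sub_sq_sub_le {ι : Type*} [Fintype ι] [DecidableEq ι] {b b' : ι → ℝ}
    (hb : ∀ i, b i ∈ Set.Icc (0 : ℝ) 1) (hb' : ∀ i, b' i ∈ Set.Icc (0 : ℝ) 1) {i₀ : ι}
    (heq : ∀ j, j ≠ i₀ → b j = b' j) :
    |∑ i, ∑ j, (b i - b j) ^ 2 - ∑ i, ∑ j, (b' i - b' j) ^ 2| ≤ 2 * Fintype.card ι := by
  calc |∑ i, ∑ j, (b i - b j) ^ 2 - ∑ i, ∑ j, (b' i - b' j) ^ 2|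
      = |∑ i, ∑ j, ((b i - b j) ^ 2 - (b' i - b' j) ^ 2)| := by simp only [sum_sub_distrib]
    _ ≤ ∑ i, ∑ j, |(b i - b j) ^ 2 - (b' i - b' j) ^ 2| :=
        (abs_sum_le_sum_abs _ _).trans (sum_le_sum fun i _ => abs_sum_le_sum_abs _ _)
    _ ≤ ∑ i : ι, ∑ j : ι, ((if i = i₀ then 1 else 0) + (if j = i₀ then 1 else 0)) :=
        sum_le_sum fun i _ => sum_le_sum fun j _ => abs_sub_sq_sub_sub_sq_le hb hb' heq i j
    _ = 2 * Fintype.card ι := by simp [sum_add_distrib]; ring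

theorem variance_global_sensitivity_general
    {n : ℕ} (a a' : Fin n → ℝ)
    (ha : ∀ i, a i ∈ Set.Icc (0 : ℝ) 1) (ha' : ∀ i, a' i ∈ Set.Icc (0 : ℝ) 1)
    (i₀ : Fin n) (hdiff : ∀ j, j ≠ i₀ → a j = a' j) :
    |(1 / (n : ℝ) * ∑ i, (a i - 1 / (n : ℝ) * ∑ l, a l) ^ 2) -
        (1 / (n : ℝ) * ∑ i, (a' i - 1 / (n : ℝ) * ∑ l, a' l) ^ 2)| ≤ 1 / (n : ℝ) := by
  have hn : (0 : ℝ) < n := by exact_mod_cast i₀.pos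
  have hpair := abs_sum_sum_sub_sq_sub_le ha ha' hdiff
  rw [Fintype.card_fin] at hpair
  have hvar := sum_sq_sub_mean_eq_sum_sum_sq_sub (ι := Fin n)
  simp only [Fintype.card_fin] at hvar
  rw [hvar, hvar, ← mul_sub, ← mul_sub, abs_mul, abs_mul, abs_of_pos (by positivity),
    abs_of_pos (by positivity)]
  calc 1 / (n : ℝ) * (1 / (2 * n) * |_|) ≤ 1 / n * (1 / (2 * n) * (2 * n)) := by gcongr
    _ = 1 / n := by field_simp

/-- the variance of n values in [0,1] has global sensitivity at most
1/n when a single value is changed. -/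
theorem variance_global_sensitivity
    {n : ℕ} (hn : 0 < n) (a a' : Fin n → ℝ)
    (ha : ∀ i, a i ∈ Set.Icc (0 : ℝ) 1) (ha' : ∀ i, a' i ∈ Set.Icc (0 : ℝ) 1)
    (i₀ : Fin n) (hdiff : ∀ j, j ≠ i₀ → a j = a' j) :
    |(1 / (n : ℝ) * ∑ i, (a i - 1 / (n : ℝ) * ∑ l, a l) ^ 2) -
        (1 / (n : ℝ) * ∑ i, (a' i - 1 / (n : ℝ) * ∑ l, a' l) ^ 2)| ≤ 1 / (n : ℝ) :=
  variance_global_sensitivity_general a a' ha ha' i₀ hdiff
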